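/- Let 0 < α ≤ 1/4. Then there is a constant C such that for all k ≥ 1, all N ≥ 1, and all n ∈ ℤ, ∑_{n₁ + n₂ = n, |n₁|,|n₂| ≤ N} |φ(n₁) + φ(n₂)|^k ⟨n₁⟩^{-2α} ⟨n₂⟩^{-2α} ≤ C, with C independent of k, N and n. -/

import Mathlib

/-- The BBM Fourier multiplier symbol `φ(n) = -i n / (1 + n²)`. -/
noncomputable def phiSym (n : ℤ) : ℂ := (-Complex.I * (n : ℂ)) / (1 + (n : ℂ) ^ 2)

/-- The Japanese bracket `⟨n⟩ = √(1 + n²)`. -/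
noncomputable def jbr (n : ℤ) : ℝ := Real.sqrt (1 + (n : ℝ) ^ 2)

/-- The set of pairs `(n₁, n₂)` with `|n₁|, |n₂| ≤ N` and `n₁ + n₂ = n`. -/
noncomputable def pairSet (N : ℕ) (n : ℤ) : Finset (ℤ × ℤ) :=
  ((Finset.Icc (-(N : ℤ)) (N : ℤ)) ×ˢ (Finset.Icc (-(N : ℤ)) (N : ℤ))).filter
    (fun p => p.1 + p.2 = n)

/-! Since `|φ(m)| ≤ 1/2`, the quantity `|φ(n₁) + φ(n₂)|` is at most `1`, so its `k`-th power is
at most itself, which is at most `⟨n₁⟩⁻¹ + ⟨n₂⟩⁻¹`. Each summand is therefore bounded by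
`⟨n₁⟩^{-1-2α} + ⟨n₂⟩^{-1-2α}`, and since `n₁ + n₂ = n` each of `n₁`, `n₂` determines the pair,
so the whole sum is at most `2 ∑_{m ∈ ℤ} ⟨m⟩^{-1-2α} < ∞`. -/

open Finset

lemma jbr_sq (m : ℤ) : jbr m ^ 2 = 1 + (m : ℝ) ^ 2 :=
  Real.sq_sqrt (by positivity)

lemma one_le_jbr (m : ℤ) : 1 ≤ jbr m :=
  Real.one_le_sqrt.mpr (by nlinarith [sq_nonneg (m : ℝ)])

lemma jbr_pos (m : ℤ) : 0 < jbr m :=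
  one_pos.trans_le (one_le_jbr m)

lemma abs_le_jbr (m : ℤ) : |(m : ℝ)| ≤ jbr m :=
  Real.abs_le_sqrt (by linarith)

lemma norm_phiSym (m : ℤ) : ‖phiSym m‖ = |(m : ℝ)| / jbr m ^ 2 := by
  have hden : (1 + (m : ℂ) ^ 2) = ((1 + (m : ℝ) ^ 2 : ℝ) : ℂ) := by push_cast; ring
  rw [phiSym, hden, norm_div, norm_mul, norm_neg, Complex.norm_I, one_mul, Complex.norm_real,
    Complex.norm_intCast, jbr_sq, Real.norm_of_nonneg (by positivity)]

lemma norm_phiSym_le_half (m : ℤ) : ‖phiSym m‖ ≤ 1 / 2 := by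
  rw [norm_phiSym, jbr_sq, div_le_div_iff₀ (by positivity) two_pos]
  nlinarith [sq_nonneg (|(m : ℝ)| - 1), sq_abs (m : ℝ)]

lemma norm_phiSym_le_inv_jbr (m : ℤ) : ‖phiSym m‖ ≤ (jbr m)⁻¹ := by
  have hj := jbr_pos m
  calc ‖phiSym m‖ = |(m : ℝ)| / jbr m ^ 2 := norm_phiSym m
    _ ≤ jbr m / jbr m ^ 2 := by gcongr; exact abs_le_jbr m
    _ = (jbr m)⁻¹ := by field_simp

lemma norm_phiSym_add_le_one (a b : ℤ) : ‖phiSym a + phiSym b‖ ≤ 1 :=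
  (norm_add_le _ _).trans <| by linarith [norm_phiSym_le_half a, norm_phiSym_le_half b]

lemma inv_jbr_mul_rpow_neg (m : ℤ) (s : ℝ) : (jbr m)⁻¹ * jbr m ^ (-s) = jbr m ^ (-(1 + s)) := by
  rw [show -(1 + s) = -s - 1 by ring, Real.rpow_sub_one (jbr_pos m).ne', div_eq_inv_mul]

lemma summable_jbr_rpow_neg {s : ℝ} (hs : 1 < s) : Summable fun m : ℤ => jbr m ^ (-s) := by
  refine (Real.summable_abs_int_rpow hs).of_norm_bounded_eventually ?_
  filter_upwards [(Set.finite_singleton (0 : ℤ)).compl_mem_cofinite] with m hm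
  have hm : (0 : ℝ) < |(m : ℝ)| := abs_pos.mpr (Int.cast_ne_zero.mpr hm)
  rw [Real.norm_of_nonneg (Real.rpow_nonneg (jbr_pos m).le _)]
  exact Real.rpow_le_rpow_of_nonpos hm (abs_le_jbr m) (by linarith)

lemma norm_phiSym_add_pow_mul_le {k : ℕ} (hk : 1 ≤ k) {s : ℝ} (hs : 0 ≤ s) (a b : ℤ) :
    ‖phiSym a + phiSym b‖ ^ k * jbr a ^ (-s) * jbr b ^ (-s)
      ≤ jbr a ^ (-(1 + s)) + jbr b ^ (-(1 + s)) := by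
  have hnorm : ‖phiSym a + phiSym b‖ ^ k ≤ (jbr a)⁻¹ + (jbr b)⁻¹ :=
    calc ‖phiSym a + phiSym b‖ ^ k ≤ ‖phiSym a + phiSym b‖ :=
          pow_le_of_le_one (norm_nonneg _) (norm_phiSym_add_le_one a b) (by omega)
      _ ≤ ‖phiSym a‖ + ‖phiSym b‖ := norm_add_le _ _
      _ ≤ (jbr a)⁻¹ + (jbr b)⁻¹ :=
          add_le_add (norm_phiSym_le_inv_jbr a) (norm_phiSym_le_inv_jbr b)
  have hra : jbr a ^ (-s) ≤ 1 := Real.rpow_le_one_of_one_le_of_nonpos (one_le_jbr a) (by linarith)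
  have hrb : jbr b ^ (-s) ≤ 1 := Real.rpow_le_one_of_one_le_of_nonpos (one_le_jbr b) (by linarith)
  have ha := jbr_pos a
  have hb := jbr_pos b
  calc ‖phiSym a + phiSym b‖ ^ k * jbr a ^ (-s) * jbr b ^ (-s)
      ≤ ((jbr a)⁻¹ + (jbr b)⁻¹) * jbr a ^ (-s) * jbr b ^ (-s) := by gcongr
    _ = jbr a ^ (-(1 + s)) * jbr b ^ (-s) + jbr b ^ (-(1 + s)) * jbr a ^ (-s) := by
        rw [← inv_jbr_mul_rpow_neg, ← inv_jbr_mul_rpow_neg]; ring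
    _ ≤ jbr a ^ (-(1 + s)) * 1 + jbr b ^ (-(1 + s)) * 1 := by gcongr
    _ = jbr a ^ (-(1 + s)) + jbr b ^ (-(1 + s)) := by ring

lemma sum_comp_le_tsum_of_injOn {ι κ : Type*} {s : Finset ι} {e : ι → κ} (he : Set.InjOn e s)
    {g : κ → ℝ} (hg : Summable g) (hg0 : ∀ j, 0 ≤ g j) : ∑ i ∈ s, g (e i) ≤ ∑' j, g j := by
  classical
  rw [← Finset.sum_image he]
  exact hg.sum_le_tsum _ fun j _ => hg0 j

lemma injOn_fst_pairSet (N : ℕ) (n : ℤ) : Set.InjOn Prod.fst (pairSet N n : Set (ℤ × ℤ)) := by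
  intro p hp q hq h
  simp only [pairSet, coe_filter, Set.mem_ofPred_eq] at hp hq
  exact Prod.ext h (by omega)

lemma injOn_snd_pairSet (N : ℕ) (n : ℤ) : Set.InjOn Prod.snd (pairSet N n : Set (ℤ × ℤ)) := by
  intro p hp q hq h
  simp only [pairSet, coe_filter, Set.mem_ofPred_eq] at hp hq
  exact Prod.ext (by omega) h

theorem sum_phi_power_uniform_bound_general (α : ℝ) (hα₁ : 0 < α) :
    ∃ C : ℝ, ∀ (k N : ℕ), 1 ≤ k → 1 ≤ N → ∀ n : ℤ,
      ∑ p ∈ pairSet N n,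
        ‖phiSym p.1 + phiSym p.2‖ ^ k
          * jbr p.1 ^ (-(2 * α)) * jbr p.2 ^ (-(2 * α)) ≤ C := by
  set f : ℤ → ℝ := fun m => jbr m ^ (-(1 + 2 * α))
  have hf : Summable f := summable_jbr_rpow_neg (by linarith)
  have hf0 : ∀ m, 0 ≤ f m := fun m => Real.rpow_nonneg (jbr_pos m).le _
  refine ⟨2 * ∑' m, f m, fun k N hk _ n => ?_⟩
  calc ∑ p ∈ pairSet N n, ‖phiSym p.1 + phiSym p.2‖ ^ k
          * jbr p.1 ^ (-(2 * α)) * jbr p.2 ^ (-(2 * α))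
      ≤ ∑ p ∈ pairSet N n, (f p.1 + f p.2) :=
        sum_le_sum fun p _ => norm_phiSym_add_pow_mul_le hk (by linarith) p.1 p.2
    _ = ∑ p ∈ pairSet N n, f p.1 + ∑ p ∈ pairSet N n, f p.2 := sum_add_distrib
    _ ≤ ∑' m, f m + ∑' m, f m :=
        add_le_add (sum_comp_le_tsum_of_injOn (injOn_fst_pairSet N n) hf hf0)
          (sum_comp_le_tsum_of_injOn (injOn_snd_pairSet N n) hf hf0)
    _ = 2 * ∑' m, f m := by ring

/-- For `0 < α ≤ 1/4`, the sums
`∑_{n₁+n₂=n, |n₁|,|n₂| ≤ N} |φ(n₁)+φ(n₂)|^k ⟨n₁⟩^{-2α} ⟨n₂⟩^{-2α}` are bounded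
uniformly in `k ≥ 1`, `N ≥ 1` and `n ∈ ℤ`. -/
theorem sum_phi_power_uniform_bound (α : ℝ) (hα₁ : 0 < α) (hα₂ : α ≤ 1 / 4) :
    ∃ C : ℝ, ∀ (k N : ℕ), 1 ≤ k → 1 ≤ N → ∀ n : ℤ,
      ∑ p ∈ pairSet N n,
        ‖phiSym p.1 + phiSym p.2‖ ^ k
          * jbr p.1 ^ (-(2 * α)) * jbr p.2 ^ (-(2 * α)) ≤ C :=
  sum_phi_power_uniform_bound_general α hα₁
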